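/- arXiv:1407.2403 — 2 statements merged into one kernel-verified Lean document; each statement's English description precedes it below -/
import Mathlib

section
/- Let X be a Banach space with the Radon–Nikodym property (or assume all given paths are recovered by integrating their derivatives), let w : X → (0,∞) be a Lipschitz weight function, and let γ, λ : [0,1] → X be Lipschitz paths with γ(0) = λ(0), with ‖γ'(t)‖, ‖λ'(t)‖ ∈ [1/C, C] a.e. for some C > 0. If γ'(t)·w(γ(t)) = λ'(t)·w(λ(t)) for a.e. t, then γ = λ. -/
/-!
The weights differ by at most `a ‖γ - λ‖` and `w ∘ γ` has a positive minimum `m` on `[0,1]`,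
so `w(γ) γ' = w(λ) λ'` gives `‖γ' - λ'‖ ≤ (a C / m) ‖γ - λ‖` almost everywhere. Integrating,
`‖γ - λ‖` satisfies a homogeneous integral Grönwall inequality, hence vanishes.
-/

open MeasureTheory Set intervalIntegral

section

variable {E : Type*} [NormedAddCommGroup E] [NormedSpace ℝ E] {a b K : ℝ}

theorem hasDerivWithinAt_integral_Ici_of_continuousOn [CompleteSpace E] {f : ℝ → E}
    (hf : ContinuousOn f (Icc a b)) {x : ℝ} (hx : x ∈ Ico a b) :
    HasDerivWithinAt (fun t => ∫ s in a..t, f s) (f x) (Ici x) x := by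
  have : Fact (x ∈ Icc a b) := ⟨Ico_subset_Icc_self hx⟩
  exact (integral_hasDerivWithinAt_right (s := Icc a b) (t := Icc a b)
    ((hf.mono (Icc_subset_Icc_right hx.2.le)).intervalIntegrable_of_Icc hx.1)
    (hf.stronglyMeasurableAtFilter_nhdsWithin measurableSet_Icc x)
    (hf x this.out)).mono_of_mem_nhdsWithin (Icc_mem_nhdsGE_of_mem hx)

theorem continuousOn_integral_of_integrableOn {f : ℝ → E} (hf : IntegrableOn f (Icc a b)) :
    ContinuousOn (fun t => ∫ s in a..t, f s) (Icc a b) :=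
  (continuousOn_primitive hf).congr fun _ ht => integral_of_le ht.1

theorem continuousOn_of_eq_add_integral {γ γ' : ℝ → E} (hγ' : IntegrableOn γ' (Icc a b))
    (hγ : ∀ t ∈ Icc a b, γ t = γ a + ∫ s in a..t, γ' s) : ContinuousOn γ (Icc a b) :=
  (continuousOn_const.add (continuousOn_integral_of_integrableOn hγ')).congr hγ

theorem eqOn_zero_of_le_integral_const_mul {f : ℝ → ℝ} (hf : ContinuousOn f (Icc a b))
    (hK : 0 ≤ K) (hf₀ : ∀ t ∈ Icc a b, 0 ≤ f t) (h : ∀ t ∈ Icc a b, f t ≤ ∫ s in a..t, K * f s) :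
    EqOn f 0 (Icc a b) := by
  -- `F' = K f ≤ K F` and `F a = 0`, so the differential Grönwall inequality gives `F = 0 ≥ f`.
  set F := fun t => ∫ s in a..t, K * f s
  have hKf : ContinuousOn (fun s => K * f s) (Icc a b) := continuousOn_const.mul hf
  have hF_bound : ∀ x ∈ Ico a b, ‖K * f x‖ ≤ K * ‖F x‖ := by
    intro x hx
    rw [Real.norm_eq_abs, abs_of_nonneg (mul_nonneg hK (hf₀ x (Ico_subset_Icc_self hx)))]
    exact mul_le_mul_of_nonneg_left ((h x (Ico_subset_Icc_self hx)).trans (le_abs_self _)) hK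
  have hF_zero := eq_zero_of_abs_deriv_le_mul_abs_self_of_eq_zero_right
    (continuousOn_integral_of_integrableOn (hKf.integrableOn_compact isCompact_Icc))
    (fun x hx => hasDerivWithinAt_integral_Ici_of_continuousOn hKf hx) integral_same hF_bound
  exact fun t ht => le_antisymm ((h t ht).trans (hF_zero t ht).le) (hf₀ t ht)

theorem eqOn_of_ae_norm_sub_le {γ η γ' η' : ℝ → E} (hK : 0 ≤ K)
    (hγ' : IntegrableOn γ' (Icc a b)) (hη' : IntegrableOn η' (Icc a b))
    (hγ : ∀ t ∈ Icc a b, γ t = γ a + ∫ s in a..t, γ' s)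
    (hη : ∀ t ∈ Icc a b, η t = η a + ∫ s in a..t, η' s) (ha : γ a = η a)
    (hd : ∀ᵐ t ∂volume.restrict (Icc a b), ‖γ' t - η' t‖ ≤ K * ‖γ t - η t‖) :
    EqOn γ η (Icc a b) := by
  have hcont : ContinuousOn (fun t => ‖γ t - η t‖) (Icc a b) :=
    ((continuousOn_of_eq_add_integral hγ' hγ).sub (continuousOn_of_eq_add_integral hη' hη)).norm
  have hle : ∀ t ∈ Icc a b, ‖γ t - η t‖ ≤ ∫ s in a..t, K * ‖γ s - η s‖ := by
    intro t ht
    have hsub : Icc a t ⊆ Icc a b := Icc_subset_Icc le_rfl ht.2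
    have hint : ∀ {g : ℝ → E}, IntegrableOn g (Icc a b) → IntervalIntegrable g volume a t :=
      fun hg => (intervalIntegrable_iff_integrableOn_Icc_of_le ht.1).2 (hg.mono_set hsub)
    have hdiff : γ t - η t = ∫ s in a..t, (γ' s - η' s) := by
      rw [integral_sub (hint hγ') (hint hη'), hγ t ht, hη t ht, ha]
      abel
    calc ‖γ t - η t‖ ≤ ∫ s in a..t, ‖γ' s - η' s‖ := hdiff ▸ norm_integral_le_integral_norm ht.1
      _ ≤ ∫ s in a..t, K * ‖γ s - η s‖ :=
        integral_mono_ae_restrict ht.1 (hint (hγ'.sub hη')).norm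
          ((continuousOn_const.mul (hcont.mono hsub)).intervalIntegrable_of_Icc ht.1)
          (ae_mono (Measure.restrict_mono hsub le_rfl) hd)
  intro t ht
  simpa [sub_eq_zero] using
    eqOn_zero_of_le_integral_const_mul hcont hK (fun _ _ => norm_nonneg _) hle ht

theorem norm_sub_eq_of_smul_eq_smul {p q : ℝ} {u v : E} (hp : p ≠ 0) (h : p • u = q • v) :
    ‖u - v‖ = |q - p| / |p| * ‖v‖ := by
  have huv : u - v = (p⁻¹ * (q - p)) • v := by
    rw [← smul_smul, sub_smul, ← h, ← smul_sub, smul_smul, inv_mul_cancel₀ hp, one_smul]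
  rw [huv, norm_smul, Real.norm_eq_abs, abs_mul, abs_inv, inv_mul_eq_div]

theorem norm_sub_le_of_smul_eq_smul {w : E → ℝ} {L : NNReal} (hw : LipschitzWith L w)
    {m C : ℝ} {x y u v : E} (hm : 0 < m) (hx : m ≤ w x) (hv : ‖v‖ ≤ C)
    (h : w x • u = w y • v) : ‖u - v‖ ≤ L * C / m * ‖x - y‖ := by
  have hwx : 0 < w x := hm.trans_le hx
  have hdist : |w y - w x| ≤ L * ‖x - y‖ := by
    simpa [Real.dist_eq, dist_eq_norm, norm_sub_rev x y] using hw.dist_le_mul y x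
  calc ‖u - v‖ = |w y - w x| / |w x| * ‖v‖ := norm_sub_eq_of_smul_eq_smul hwx.ne' h
    _ ≤ L * ‖x - y‖ / m * C := by
      rw [abs_of_pos hwx]
      gcongr
    _ = L * C / m * ‖x - y‖ := by ring

theorem integrableOn_deriv_of_ae_norm_le [CompleteSpace E] {f : ℝ → E} {s : Set ℝ} {C : ℝ}
    (hs : volume s ≠ ⊤)
    (h : ∀ᵐ t ∂volume.restrict s, ‖deriv f t‖ ≤ C) : IntegrableOn (deriv f) s :=
  Measure.integrableOn_of_bounded hs (stronglyMeasurable_deriv f).aestronglyMeasurable h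

end

theorem stmt_8_general {X : Type*} [NormedAddCommGroup X] [NormedSpace ℝ X] [CompleteSpace X]
    (w : X → ℝ) (a : NNReal) (hw_lip : LipschitzWith a w) (hw_pos : ∀ x, 0 < w x)
    (γ lam : ℝ → X)
    (h0 : γ 0 = lam 0)
    -- the paths are recovered by integrating their derivatives (RNP):
    (hftcγ : ∀ t ∈ Icc (0:ℝ) 1, γ t = γ 0 + ∫ s in (0:ℝ)..t, deriv γ s)
    (hftcL : ∀ t ∈ Icc (0:ℝ) 1, lam t = lam 0 + ∫ s in (0:ℝ)..t, deriv lam s)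
    (C : ℝ) (hC : 0 < C)
    (hspeedγ : ∀ᵐ t ∂(volume.restrict (Icc (0:ℝ) 1)),
      1 / C ≤ ‖deriv γ t‖ ∧ ‖deriv γ t‖ ≤ C)
    (hspeedL : ∀ᵐ t ∂(volume.restrict (Icc (0:ℝ) 1)),
      1 / C ≤ ‖deriv lam t‖ ∧ ‖deriv lam t‖ ≤ C)
    (heq : ∀ᵐ t ∂(volume.restrict (Icc (0:ℝ) 1)),
      w (γ t) • deriv γ t = w (lam t) • deriv lam t) :
    ∀ t ∈ Icc (0:ℝ) 1, γ t = lam t := by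
  have hγ' := integrableOn_deriv_of_ae_norm_le (by simp) (hspeedγ.mono fun _ h => h.2)
  have hL' := integrableOn_deriv_of_ae_norm_le (by simp) (hspeedL.mono fun _ h => h.2)
  obtain ⟨t₀, -, hmin⟩ := isCompact_Icc.exists_isMinOn (nonempty_Icc.2 zero_le_one)
    (hw_lip.continuous.comp_continuousOn (continuousOn_of_eq_add_integral hγ' hftcγ))
  refine eqOn_of_ae_norm_sub_le (div_nonneg (mul_nonneg a.2 hC.le) (hw_pos (γ t₀)).le)
    hγ' hL' hftcγ hftcL h0 ?_
  filter_upwards [heq, hspeedL, ae_restrict_mem measurableSet_Icc] with t ht hspeed htmem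
  exact norm_sub_le_of_smul_eq_smul hw_lip (hw_pos _) (hmin htmem) hspeed.2 ht

theorem stmt_8 {X : Type*} [NormedAddCommGroup X] [NormedSpace ℝ X] [CompleteSpace X]
    (w : X → ℝ) (a : NNReal) (hw_lip : LipschitzWith a w) (hw_pos : ∀ x, 0 < w x)
    (γ lam : ℝ → X) (Kγ KL : NNReal)
    (hlipγ : LipschitzOnWith Kγ γ (Icc (0:ℝ) 1))
    (hlipL : LipschitzOnWith KL lam (Icc (0:ℝ) 1))
    (h0 : γ 0 = lam 0)
    -- the paths are recovered by integrating their derivatives (RNP):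
    (hftcγ : ∀ t ∈ Icc (0:ℝ) 1, γ t = γ 0 + ∫ s in (0:ℝ)..t, deriv γ s)
    (hftcL : ∀ t ∈ Icc (0:ℝ) 1, lam t = lam 0 + ∫ s in (0:ℝ)..t, deriv lam s)
    (C : ℝ) (hC : 0 < C)
    (hspeedγ : ∀ᵐ t ∂(volume.restrict (Icc (0:ℝ) 1)),
      1 / C ≤ ‖deriv γ t‖ ∧ ‖deriv γ t‖ ≤ C)
    (hspeedL : ∀ᵐ t ∂(volume.restrict (Icc (0:ℝ) 1)),
      1 / C ≤ ‖deriv lam t‖ ∧ ‖deriv lam t‖ ≤ C)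
    (heq : ∀ᵐ t ∂(volume.restrict (Icc (0:ℝ) 1)),
      w (γ t) • deriv γ t = w (lam t) • deriv lam t) :
    ∀ t ∈ Icc (0:ℝ) 1, γ t = lam t :=
  stmt_8_general w a hw_lip hw_pos γ lam h0 hftcγ hftcL C hC hspeedγ hspeedL heq
end

section
/- Let w : X → (0,∞) be a continuous weight on a metric space (or normed space) X, let γ : [0,1] → Ω be a w-geodesic from x₀ with r = d_w(x₀, γ(1)), where d_w is the inner metric induced by w. Then lim_{t→1⁻} d_{‖·‖}(γ(t), S_w(x₀, r)) / ‖γ(t) - γ(1)‖ = 1, i.e. geodesics meet the metric spheres they terminate on 'orthogonally' in this metric sense. -/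
open MeasureTheory Metric Set intervalIntegral Filter

variable {X : Type*} [NormedAddCommGroup X] [NormedSpace ℝ X]

/-- The `w`-weighted length of the restriction of a path `γ` to `[a,b]`. -/
noncomputable def wLengthOn (w : X → ℝ) (γ : ℝ → X) (a b : ℝ) : ℝ :=
  ∫ s in a..b, w (γ s) * ‖deriv γ s‖

/-- An admissible path in `Ω` joining `x` to `y`. -/
def IsWPath (Ω : Set X) (x y : X) (γ : ℝ → X) : Prop :=
  (∃ K : NNReal, LipschitzOnWith K γ (Icc (0:ℝ) 1)) ∧
  (∀ᵐ t ∂(volume.restrict (Icc (0:ℝ) 1)), DifferentiableAt ℝ γ t) ∧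
  (∀ t ∈ Icc (0:ℝ) 1, γ t = γ 0 + ∫ s in (0:ℝ)..t, deriv γ s) ∧
  γ 0 = x ∧ γ 1 = y ∧ (∀ t ∈ Icc (0:ℝ) 1, γ t ∈ Ω)

/-- The inner (pseudo)metric on `Ω` induced by the conformal weight `w`. -/
noncomputable def wDist (Ω : Set X) (w : X → ℝ) (x y : X) : ℝ :=
  sInf ((fun γ => wLengthOn w γ 0 1) '' {γ | IsWPath Ω x y γ})

/-!
Since `γ 1` lies on the sphere, the distance from `γ t` to it is at most `‖γ t - γ 1‖`.
Conversely, near `γ 1` the weight is squeezed between constants `m ≤ w ≤ M` with `m / M`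
as close to `1` as we like. If `z` is a point of the sphere near `γ t`, then following `γ` up to
time `t` and then the segment from `γ t` to `z` joins `x₀` to `z`, so
`r ≤ L(γ|[0,t]) + M ‖z - γ t‖`. As `γ` is minimizing, `r = L(γ|[0,t]) + L(γ|[t,1])`, and
`L(γ|[t,1]) ≥ m ‖γ 1 - γ t‖`. Hence `m ‖γ t - γ 1‖ ≤ M ‖z - γ t‖`, and the ratio lies between
`m / M` and `1` for `t` close to `1`.
-/

theorem LipschitzOnWith.Icc_union {E : Type*} [PseudoMetricSpace E] {f : ℝ → E} {K : NNReal}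
    {a b c : ℝ} (hab : LipschitzOnWith K f (Icc a b)) (hbc : LipschitzOnWith K f (Icc b c)) :
    LipschitzOnWith K f (Icc a c) := by
  have key : ∀ x ∈ Icc a c, ∀ y ∈ Icc a c, x ≤ y → dist (f x) (f y) ≤ K * dist x y := by
    intro x hx y hy hxy
    rcases le_total y b with hyb | hby
    · exact hab.dist_le_mul x ⟨hx.1, hxy.trans hyb⟩ y ⟨hy.1, hyb⟩
    rcases le_total b x with hbx | hxb
    · exact hbc.dist_le_mul x ⟨hbx, hx.2⟩ y ⟨hbx.trans hxy, hy.2⟩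
    calc dist (f x) (f y) ≤ dist (f x) (f b) + dist (f b) (f y) := dist_triangle _ _ _
      _ ≤ K * dist x b + K * dist b y :=
        add_le_add (hab.dist_le_mul x ⟨hx.1, hxb⟩ b ⟨hx.1.trans hxb, le_rfl⟩)
          (hbc.dist_le_mul b ⟨le_rfl, hby.trans hy.2⟩ y ⟨hby, hy.2⟩)
      _ = K * dist x y := by
        rw [Real.dist_eq, Real.dist_eq, Real.dist_eq, abs_of_nonpos (by linarith),
          abs_of_nonpos (by linarith), abs_of_nonpos (by linarith)]
        ring
  refine LipschitzOnWith.of_dist_le_mul fun x hx y hy => ?_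
  rcases le_total x y with h | h
  · exact key x hx y hy h
  · rw [dist_comm, dist_comm x]
    exact key y hy x hx h

theorem lipschitzWith_mul_sub (c d : ℝ) : LipschitzWith ‖c‖₊ fun u : ℝ => c * u - d :=
  LipschitzWith.of_dist_le_mul fun u v => by
    rw [Real.dist_eq, Real.dist_eq, coe_nnnorm, Real.norm_eq_abs, ← abs_mul, mul_sub,
      sub_sub_sub_cancel_right]

theorem ae_comp_mul_sub {p : ℝ → Prop} (h : ∀ᵐ s, p s) {c : ℝ} (hc : c ≠ 0) (d : ℝ) :
    ∀ᵐ u, p (c * u - d) :=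
  ((measurePreserving_sub_right volume d).quasiMeasurePreserving.comp
    (Measure.quasiMeasurePreserving_smul volume hc)).ae h

theorem LipschitzOnWith.integrableOn_deriv [CompleteSpace X] {f : ℝ → X} {K : NNReal} {a b : ℝ}
    (hf : LipschitzOnWith K f (Icc a b)) : IntegrableOn (deriv f) (Icc a b) := by
  rw [integrableOn_Icc_iff_integrableOn_Ioo]
  refine Measure.integrableOn_of_bounded (M := K) measure_Ioo_lt_top.ne
    (stronglyMeasurable_deriv f).aestronglyMeasurable ?_
  exact ae_restrict_of_forall_mem measurableSet_Ioo fun s hs =>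
    norm_deriv_le_of_lipschitzOn (Icc_mem_nhds hs.1 hs.2) hf

theorem LipschitzOnWith.intervalIntegrable_deriv [CompleteSpace X] {f : ℝ → X} {K : NNReal}
    {a b : ℝ} (hf : LipschitzOnWith K f (uIcc a b)) : IntervalIntegrable (deriv f) volume a b :=
  hf.integrableOn_deriv.intervalIntegrable

theorem LipschitzOnWith.intervalIntegrable_weighted [CompleteSpace X] {w : X → ℝ}
    (hw : Continuous w) {f : ℝ → X} {K : NNReal} {a b : ℝ} (hf : LipschitzOnWith K f (uIcc a b)) :
    IntervalIntegrable (fun s => w (f s) * ‖deriv f s‖) volume a b :=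
  IntervalIntegrable.continuousOn_mul
    (IntegrableOn.intervalIntegrable (Integrable.norm hf.integrableOn_deriv))
    (hw.comp_continuousOn hf.continuousOn)

namespace IsWPath

variable {Ω : Set X} {x y : X} {γ : ℝ → X} {w : X → ℝ} {a b c : ℝ}

-- Outside complete spaces the Bochner integral is `0`, so `IsWPath` forces `γ` to be constant.
theorem completeSpace (h : IsWPath Ω x y γ) (hxy : x ≠ y) : CompleteSpace X := by
  by_contra hX
  obtain ⟨-, -, hftc, rfl, rfl, -⟩ := h
  have h1 := hftc 1 ⟨zero_le_one, le_rfl⟩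
  simp only [intervalIntegral, integral_of_not_completeSpace hX, sub_zero, add_zero] at h1
  exact hxy h1.symm

theorem lipschitzOnWith_uIcc (h : IsWPath Ω x y γ) (ha : a ∈ Icc (0:ℝ) 1)
    (hb : b ∈ Icc (0:ℝ) 1) : ∃ K, LipschitzOnWith K γ (uIcc a b) :=
  let ⟨⟨K, hK⟩, _⟩ := h
  ⟨K, hK.mono (uIcc_subset_Icc ha hb)⟩

variable [CompleteSpace X]

theorem intervalIntegrable_deriv (h : IsWPath Ω x y γ) (ha : a ∈ Icc (0:ℝ) 1)
    (hb : b ∈ Icc (0:ℝ) 1) : IntervalIntegrable (deriv γ) volume a b :=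
  let ⟨_, hK⟩ := h.lipschitzOnWith_uIcc ha hb
  hK.intervalIntegrable_deriv

theorem intervalIntegrable_weighted (h : IsWPath Ω x y γ) (hw : Continuous w)
    (ha : a ∈ Icc (0:ℝ) 1) (hb : b ∈ Icc (0:ℝ) 1) :
    IntervalIntegrable (fun s => w (γ s) * ‖deriv γ s‖) volume a b :=
  let ⟨_, hK⟩ := h.lipschitzOnWith_uIcc ha hb
  hK.intervalIntegrable_weighted hw

theorem integral_deriv (h : IsWPath Ω x y γ) (ha : a ∈ Icc (0:ℝ) 1) (hb : b ∈ Icc (0:ℝ) 1) :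
    ∫ s in a..b, deriv γ s = γ b - γ a := by
  have h0 : (0:ℝ) ∈ Icc (0:ℝ) 1 := ⟨le_rfl, zero_le_one⟩
  rw [h.2.2.1 b hb, h.2.2.1 a ha, add_sub_add_left_eq_sub,
    integral_interval_sub_left (h.intervalIntegrable_deriv h0 hb)
      (h.intervalIntegrable_deriv h0 ha)]

theorem wLengthOn_add (h : IsWPath Ω x y γ) (hw : Continuous w) (ha : a ∈ Icc (0:ℝ) 1)
    (hb : b ∈ Icc (0:ℝ) 1) (hc : c ∈ Icc (0:ℝ) 1) :
    wLengthOn w γ a b + wLengthOn w γ b c = wLengthOn w γ a c :=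
  integral_add_adjacent_intervals (h.intervalIntegrable_weighted hw ha hb)
    (h.intervalIntegrable_weighted hw hb hc)

theorem mul_norm_sub_le_wLengthOn (h : IsWPath Ω x y γ) (hw : Continuous w)
    (ha : a ∈ Icc (0:ℝ) 1) (hb : b ∈ Icc (0:ℝ) 1) (hab : a ≤ b) {m : ℝ} (hm : 0 ≤ m)
    (hwm : ∀ s ∈ Icc a b, m ≤ w (γ s)) :
    m * ‖γ b - γ a‖ ≤ wLengthOn w γ a b :=
  calc m * ‖γ b - γ a‖ = m * ‖∫ s in a..b, deriv γ s‖ := by rw [h.integral_deriv ha hb]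
    _ ≤ m * ∫ s in a..b, ‖deriv γ s‖ := by gcongr; exact norm_integral_le_integral_norm hab
    _ = ∫ s in a..b, m * ‖deriv γ s‖ := (intervalIntegral.integral_const_mul _ _).symm
    _ ≤ wLengthOn w γ a b :=
      integral_mono_on hab ((h.intervalIntegrable_deriv ha hb).norm.const_mul m)
        (h.intervalIntegrable_weighted hw ha hb) fun s hs => by gcongr; exact hwm s hs

end IsWPath

theorem deriv_comp_mul_sub {E : Type*} [NormedAddCommGroup E] [NormedSpace ℝ E] (f : ℝ → E)
    (c d x : ℝ) : deriv (fun u => f (c * u - d)) x = c • deriv f (c * x - d) := by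
  rw [deriv_comp_mul_left c (fun v => f (v - d)), deriv_comp_sub_const]

theorem integral_congr_comp_mul_sub {E : Type*} [NormedAddCommGroup E] [NormedSpace ℝ E]
    {f g : ℝ → E} {a b c d : ℝ} (hab : a ≤ b) (h : EqOn f (fun u => c • g (c * u - d)) (Ioo a b)) :
    ∫ u in a..b, f u = ∫ u in c * a - d..c * b - d, g u := by
  rw [integral_congr_Ioo_of_le hab h, intervalIntegral.integral_smul, smul_integral_comp_mul_sub]

theorem IsWPath.of_integral_deriv {Ω : Set X} {x y : X} {γ : ℝ → X} {K : NNReal}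
    (hK : LipschitzOnWith K γ (Icc 0 1)) (hd : ∀ᵐ s, s ∈ Icc (0:ℝ) 1 → DifferentiableAt ℝ γ s)
    (hftc : ∀ s ∈ Icc (0:ℝ) 1, ∫ u in (0:ℝ)..s, deriv γ u = γ s - γ 0)
    (h0 : γ 0 = x) (h1 : γ 1 = y) (hΩ : MapsTo γ (Icc 0 1) Ω) : IsWPath Ω x y γ :=
  ⟨⟨K, hK⟩, (ae_restrict_iff' measurableSet_Icc).2 hd,
    fun s hs => by rw [hftc s hs, add_sub_cancel], h0, h1, hΩ⟩

theorem wDist_le_wLengthOn {Ω : Set X} {w : X → ℝ} {x y : X} {γ : ℝ → X}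
    (hw : ∀ x, 0 ≤ w x) (h : IsWPath Ω x y γ) : wDist Ω w x y ≤ wLengthOn w γ 0 1 := by
  refine csInf_le ⟨0, ?_⟩ ⟨γ, h, rfl⟩
  rintro _ ⟨σ, -, rfl⟩
  exact integral_nonneg zero_le_one fun u _ => mul_nonneg (hw _) (norm_nonneg _)

theorem wLengthOn_comp_mul_left (w : X → ℝ) (γ : ℝ → X) {t : ℝ} (ht : 0 ≤ t) :
    wLengthOn w (fun s => γ (t * s)) 0 1 = wLengthOn w γ 0 t := by
  unfold wLengthOn
  rw [integral_congr_comp_mul_sub (c := t) (d := 0) (g := fun u => w (γ u) * ‖deriv γ u‖)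
    zero_le_one fun u _ => ?_]
  · simp
  · simp only [deriv_comp_mul_left, norm_smul, Real.norm_of_nonneg ht, sub_zero, smul_eq_mul]
    ring

theorem IsWPath.comp_mul_left [CompleteSpace X] {Ω : Set X} {x y : X} {γ : ℝ → X} {t : ℝ}
    (h : IsWPath Ω x y γ) (ht : t ∈ Ioc (0:ℝ) 1) : IsWPath Ω x (γ t) (fun s => γ (t * s)) := by
  have ⟨⟨K, hK⟩, hd, _, h0, _, hΩ⟩ := h
  have hmaps : MapsTo (t * ·) (Icc (0:ℝ) 1) (Icc 0 1) := fun s hs =>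
    ⟨mul_nonneg ht.1.le hs.1, mul_le_one₀ ht.2 hs.1 hs.2⟩
  refine .of_integral_deriv (hK.comp (lipschitzWith_smul t).lipschitzOnWith hmaps) ?_ ?_
    (by simpa using h0) (by simp) fun s hs => hΩ _ (hmaps hs)
  · have hd' := ae_comp_mul_sub ((ae_restrict_iff' measurableSet_Icc).1 hd) ht.1.ne' 0
    filter_upwards [hd'] with s hs hsI
    simp only [sub_zero] at hs
    exact (hs (hmaps hsI)).comp s (differentiableAt_id.const_mul t)
  · intro s hs
    rw [integral_congr_comp_mul_sub (c := t) (d := 0) (g := deriv γ) hs.1 fun u _ => by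
      simp [deriv_comp_mul_left]]
    simpa using h.integral_deriv ⟨le_rfl, zero_le_one⟩ (hmaps hs)

noncomputable def pathTrans {α : Type*} (γ₁ γ₂ : ℝ → α) (s : ℝ) : α :=
  if s ≤ 1/2 then γ₁ (2 * s) else γ₂ (2 * s - 1)

section Trans

theorem pathTrans_eqOn_left {α : Type*} {γ₁ γ₂ : ℝ → α} :
    EqOn (pathTrans γ₁ γ₂) (fun s => γ₁ (2 * s)) (Iic (1/2)) :=
  fun _ hs => if_pos hs

theorem pathTrans_eqOn_right {α : Type*} {γ₁ γ₂ : ℝ → α} (h : γ₁ 1 = γ₂ 0) :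
    EqOn (pathTrans γ₁ γ₂) (fun s => γ₂ (2 * s - 1)) (Ici (1/2)) := by
  intro s hs
  rcases (mem_Ici.1 hs).eq_or_lt with rfl | hs
  · norm_num [pathTrans, h]
  · exact if_neg (not_le.2 hs)

theorem mapsTo_two_mul : MapsTo (fun s : ℝ => 2 * s) (Icc 0 (1/2)) (Icc 0 1) :=
  fun s hs => ⟨by linarith [hs.1], by linarith [hs.2]⟩

theorem mapsTo_two_mul_sub_one : MapsTo (fun s : ℝ => 2 * s - 1) (Icc (1/2) 1) (Icc 0 1) :=
  fun s hs => ⟨by linarith [hs.1], by linarith [hs.2]⟩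

theorem lipschitzOnWith_pathTrans {E : Type*} [PseudoMetricSpace E] {γ₁ γ₂ : ℝ → E}
    {K₁ K₂ : NNReal} (h₁ : LipschitzOnWith K₁ γ₁ (Icc 0 1))
    (h₂ : LipschitzOnWith K₂ γ₂ (Icc 0 1)) (h : γ₁ 1 = γ₂ 0) :
    LipschitzOnWith (max K₁ K₂ * ‖(2:ℝ)‖₊) (pathTrans γ₁ γ₂) (Icc 0 1) := by
  refine LipschitzOnWith.Icc_union (b := 1/2) (fun u hu v hv => ?_) (fun u hu v hv => ?_)
  · rw [pathTrans_eqOn_left hu.2, pathTrans_eqOn_left hv.2]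
    exact (h₁.weaken (le_max_left K₁ K₂)).comp (lipschitzWith_smul (2:ℝ)).lipschitzOnWith
      mapsTo_two_mul hu hv
  · rw [pathTrans_eqOn_right h hu.1, pathTrans_eqOn_right h hv.1]
    exact (h₂.weaken (le_max_right K₁ K₂)).comp (lipschitzWith_mul_sub 2 1).lipschitzOnWith
      mapsTo_two_mul_sub_one hu hv

variable {Ω : Set X} {x y z : X} {γ₁ γ₂ : ℝ → X} {s : ℝ}

theorem deriv_pathTrans_of_lt (hs : s < 1/2) :
    deriv (pathTrans γ₁ γ₂) s = (2:ℝ) • deriv γ₁ (2 * s) := by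
  rw [(pathTrans_eqOn_left.eventuallyEq_of_mem (Iic_mem_nhds hs)).deriv_eq, deriv_comp_mul_left]

theorem deriv_pathTrans_of_gt (h : γ₁ 1 = γ₂ 0) (hs : 1/2 < s) :
    deriv (pathTrans γ₁ γ₂) s = (2:ℝ) • deriv γ₂ (2 * s - 1) := by
  rw [((pathTrans_eqOn_right h).eventuallyEq_of_mem (Ici_mem_nhds hs)).deriv_eq,
    deriv_comp_mul_sub]

theorem ae_differentiableAt_pathTrans
    (hd₁ : ∀ᵐ s ∂(volume.restrict (Icc (0:ℝ) 1)), DifferentiableAt ℝ γ₁ s)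
    (hd₂ : ∀ᵐ s ∂(volume.restrict (Icc (0:ℝ) 1)), DifferentiableAt ℝ γ₂ s) (h : γ₁ 1 = γ₂ 0) :
    ∀ᵐ s, s ∈ Icc (0:ℝ) 1 → DifferentiableAt ℝ (pathTrans γ₁ γ₂) s := by
  filter_upwards [ae_comp_mul_sub ((ae_restrict_iff' measurableSet_Icc).1 hd₁) two_ne_zero 0,
    ae_comp_mul_sub ((ae_restrict_iff' measurableSet_Icc).1 hd₂) two_ne_zero 1,
    volume.ae_ne (1/2)] with s hs₁ hs₂ hs hsI
  rcases hs.lt_or_gt with hlt | hgt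
  · simp only [sub_zero] at hs₁
    exact ((hs₁ (mapsTo_two_mul ⟨hsI.1, hlt.le⟩)).comp s
      (differentiableAt_id.const_mul 2)).congr_of_eventuallyEq
      (pathTrans_eqOn_left.eventuallyEq_of_mem (Iic_mem_nhds hlt))
  · exact ((hs₂ (mapsTo_two_mul_sub_one ⟨hgt.le, hsI.2⟩)).comp s
      ((differentiableAt_id.const_mul 2).sub_const 1)).congr_of_eventuallyEq
      ((pathTrans_eqOn_right h).eventuallyEq_of_mem (Ici_mem_nhds hgt))

variable [CompleteSpace X]

theorem integral_deriv_pathTrans_left (h₁ : IsWPath Ω x y γ₁) (hs : s ∈ Icc (0:ℝ) (1/2)) :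
    ∫ u in (0:ℝ)..s, deriv (pathTrans γ₁ γ₂) u = γ₁ (2 * s) - x := by
  rw [integral_congr_comp_mul_sub (c := 2) (d := 0) (g := deriv γ₁) hs.1 fun u hu => by
    simpa using deriv_pathTrans_of_lt (γ₂ := γ₂) (hu.2.trans_le hs.2)]
  simpa [h₁.2.2.2.1] using h₁.integral_deriv ⟨le_rfl, zero_le_one⟩ (mapsTo_two_mul hs)

theorem integral_deriv_pathTrans_right (h₂ : IsWPath Ω y z γ₂) (h : γ₁ 1 = γ₂ 0)
    (hs : s ∈ Icc (1/2:ℝ) 1) :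
    ∫ u in (1/2:ℝ)..s, deriv (pathTrans γ₁ γ₂) u = γ₂ (2 * s - 1) - y := by
  rw [integral_congr_comp_mul_sub (c := 2) (d := 1) (g := deriv γ₂) hs.1 fun u hu =>
    deriv_pathTrans_of_gt h hu.1]
  simpa [h₂.2.2.2.1] using h₂.integral_deriv ⟨le_rfl, zero_le_one⟩ (mapsTo_two_mul_sub_one hs)

theorem IsWPath.trans (h₁ : IsWPath Ω x y γ₁) (h₂ : IsWPath Ω y z γ₂) :
    IsWPath Ω x z (pathTrans γ₁ γ₂) := by
  have ⟨⟨K₁, hK₁⟩, hd₁, _, h₁0, h₁1, hΩ₁⟩ := h₁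
  have ⟨⟨K₂, hK₂⟩, hd₂, _, h₂0, h₂1, hΩ₂⟩ := h₂
  have h : γ₁ 1 = γ₂ 0 := h₁1.trans h₂0.symm
  have hlip := lipschitzOnWith_pathTrans hK₁ hK₂ h
  have hη0 : pathTrans γ₁ γ₂ 0 = x := by simp [pathTrans, h₁0]
  refine .of_integral_deriv hlip (ae_differentiableAt_pathTrans hd₁ hd₂ h) (fun s hs => ?_) hη0
    (by rw [pathTrans_eqOn_right h (by norm_num : (1:ℝ) ∈ Ici (1/2))]; norm_num [h₂1]) ?_
  · rcases le_or_gt s (1/2) with hs' | hs'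
    · rw [integral_deriv_pathTrans_left h₁ ⟨hs.1, hs'⟩, pathTrans_eqOn_left hs', hη0]
    · have hhalf : (1/2:ℝ) ∈ Icc (0:ℝ) 1 := ⟨by norm_num, by norm_num⟩
      rw [← integral_add_adjacent_intervals (b := 1/2)
        (hlip.mono (uIcc_subset_Icc ⟨le_rfl, zero_le_one⟩ hhalf)).intervalIntegrable_deriv
        (hlip.mono (uIcc_subset_Icc hhalf hs)).intervalIntegrable_deriv,
        integral_deriv_pathTrans_left h₁ ⟨by norm_num, le_rfl⟩,
        integral_deriv_pathTrans_right h₂ h ⟨hs'.le, hs.2⟩, pathTrans_eqOn_right h hs'.le, hη0]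
      norm_num [h₁1]
  · intro s hs
    rcases le_or_gt s (1/2) with hs' | hs'
    · rw [pathTrans_eqOn_left hs']
      exact hΩ₁ _ (mapsTo_two_mul ⟨hs.1, hs'⟩)
    · rw [pathTrans_eqOn_right h hs'.le]
      exact hΩ₂ _ (mapsTo_two_mul_sub_one ⟨hs'.le, hs.2⟩)

theorem IsWPath.wLengthOn_pathTrans {w : X → ℝ} (h₁ : IsWPath Ω x y γ₁)
    (h₂ : IsWPath Ω y z γ₂) (hw : Continuous w) :
    wLengthOn w (pathTrans γ₁ γ₂) 0 1 = wLengthOn w γ₁ 0 1 + wLengthOn w γ₂ 0 1 := by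
  have h : γ₁ 1 = γ₂ 0 := h₁.2.2.2.2.1.trans h₂.2.2.2.1.symm
  rw [← (h₁.trans h₂).wLengthOn_add hw (b := 1/2) ⟨le_rfl, zero_le_one⟩
    ⟨by norm_num, by norm_num⟩ ⟨zero_le_one, le_rfl⟩]
  congr 1
  · rw [wLengthOn, integral_congr_comp_mul_sub (c := 2) (d := 0)
      (g := fun u => w (γ₁ u) * ‖deriv γ₁ u‖) (by norm_num) fun u hu => ?_]
    · norm_num [wLengthOn]
    · simp only [pathTrans_eqOn_left (mem_Iic.2 hu.2.le), deriv_pathTrans_of_lt hu.2, norm_smul,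
        sub_zero, smul_eq_mul, Real.norm_two]
      ring
  · rw [wLengthOn, integral_congr_comp_mul_sub (c := 2) (d := 1)
      (g := fun u => w (γ₂ u) * ‖deriv γ₂ u‖) (by norm_num) fun u hu => ?_]
    · norm_num [wLengthOn]
    · simp only [pathTrans_eqOn_right h (mem_Ici.2 hu.1.le), deriv_pathTrans_of_gt h hu.1,
        norm_smul, smul_eq_mul, Real.norm_two]
      ring

end Trans

section Segment

variable {Ω : Set X} {x y : X}

theorem isWPath_lineMap [CompleteSpace X] (hΩ : segment ℝ x y ⊆ Ω) :
    IsWPath Ω x y (AffineMap.lineMap x y) := by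
  refine .of_integral_deriv (lipschitzWith_lineMap x y).lipschitzOnWith
    (ae_of_all _ fun s _ => AffineMap.hasDerivAt_lineMap.differentiableAt) (fun s _ => ?_)
    (AffineMap.lineMap_apply_zero x y) (AffineMap.lineMap_apply_one x y) fun s hs =>
      hΩ (segment_eq_image_lineMap ℝ x y ▸ mem_image_of_mem _ hs)
  simp [fun u => AffineMap.hasDerivAt_lineMap (a := x) (b := y) (x := u) |>.deriv,
    AffineMap.lineMap_apply, smul_sub]

theorem wLengthOn_lineMap_le {w : X → ℝ} (hw : Continuous w) {M : ℝ}
    (hM : ∀ p ∈ segment ℝ x y, w p ≤ M) :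
    wLengthOn w (AffineMap.lineMap x y) 0 1 ≤ M * ‖y - x‖ := by
  have hd : ∀ u : ℝ, deriv (AffineMap.lineMap x y) u = y - x := fun u =>
    AffineMap.hasDerivAt_lineMap.deriv
  calc wLengthOn w (AffineMap.lineMap x y) 0 1
        = ∫ u in (0:ℝ)..1, w (AffineMap.lineMap x y u) * ‖y - x‖ := by simp only [wLengthOn, hd]
    _ ≤ ∫ _ in (0:ℝ)..1, M * ‖y - x‖ :=
      integral_mono_on zero_le_one
        (((hw.comp (lipschitzWith_lineMap x y).continuous).mul continuous_const).intervalIntegrable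
          0 1)
        intervalIntegrable_const fun u hu => by
          gcongr
          exact hM _ (segment_eq_image_lineMap ℝ x y ▸ mem_image_of_mem _ hu)
    _ = M * ‖y - x‖ := by simp

end Segment

theorem IsWPath.wDist_le_wLengthOn_add [CompleteSpace X] {Ω : Set X} {w : X → ℝ} {x₀ y z : X}
    {γ : ℝ → X} {t M : ℝ} (h : IsWPath Ω x₀ y γ) (hw_cont : Continuous w)
    (hw_nonneg : ∀ x, 0 ≤ w x) (ht : t ∈ Ioc (0:ℝ) 1) (hΩ : segment ℝ (γ t) z ⊆ Ω)
    (hM : ∀ p ∈ segment ℝ (γ t) z, w p ≤ M) :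
    wDist Ω w x₀ z ≤ wLengthOn w γ 0 t + M * ‖z - γ t‖ := by
  have hres := h.comp_mul_left ht
  have hseg := isWPath_lineMap hΩ
  calc wDist Ω w x₀ z
      ≤ wLengthOn w (pathTrans (fun s => γ (t * s)) (AffineMap.lineMap (γ t) z)) 0 1 :=
        wDist_le_wLengthOn hw_nonneg (hres.trans hseg)
    _ = wLengthOn w γ 0 t + wLengthOn w (AffineMap.lineMap (γ t) z) 0 1 := by
        rw [hres.wLengthOn_pathTrans hseg hw_cont, wLengthOn_comp_mul_left w γ ht.1.le]
    _ ≤ wLengthOn w γ 0 t + M * ‖z - γ t‖ := by gcongr; exact wLengthOn_lineMap_le hw_cont hM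

theorem exists_lt_lt_div_gt {a c : ℝ} (ha : a < 1) (hc : 0 < c) :
    ∃ m M, 0 < m ∧ m < c ∧ c < M ∧ a < m / M := by
  set b := max a 0
  have hb0 : 0 ≤ b := le_max_right a 0
  have hb1 : b < 1 := max_lt ha one_pos
  refine ⟨c * (1 + b) / 2, c * (3 - b) / 2, by positivity, by nlinarith, by nlinarith, ?_⟩
  rw [lt_div_iff₀ (by nlinarith)]
  nlinarith [le_max_left a 0, mul_pos hc (sub_pos.2 hb1)]

theorem ContinuousWithinAt.eventually_forall_Icc_dist_lt {E : Type*} [PseudoMetricSpace E]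
    {f : ℝ → E} {b : ℝ} (hf : ContinuousWithinAt f (Iic b) b) {ε : ℝ} (hε : 0 < ε) :
    ∀ᶠ τ in nhdsWithin b (Iio b), ∀ s ∈ Icc τ b, dist (f s) (f b) < ε := by
  obtain ⟨δ, hδ, hfδ⟩ := Metric.continuousWithinAt_iff.1 hf ε hε
  filter_upwards [Ioo_mem_nhdsLT (sub_lt_self b hδ)] with τ hτ s hs
  refine hfδ hs.2 ?_
  rw [Real.dist_eq, abs_of_nonpos (by linarith [hs.2])]
  linarith [hτ.1, hs.1]

namespace IsWPath

variable [CompleteSpace X] {Ω : Set X} {w : X → ℝ} {x₀ z : X} {γ : ℝ → X} {τ m M : ℝ}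

theorem mul_norm_sub_le_of_wDist_eq (h : IsWPath Ω x₀ (γ 1) γ) (hw_cont : Continuous w)
    (hw_nonneg : ∀ x, 0 ≤ w x) (hgeo : wDist Ω w x₀ (γ 1) = wLengthOn w γ 0 1)
    (hτ : τ ∈ Ioo (0:ℝ) 1) (hm : 0 ≤ m) (hwm : ∀ s ∈ Icc τ 1, m ≤ w (γ s))
    (hΩ : segment ℝ (γ τ) z ⊆ Ω) (hM : ∀ p ∈ segment ℝ (γ τ) z, w p ≤ M)
    (hz : wDist Ω w x₀ z = wDist Ω w x₀ (γ 1)) :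
    m * ‖γ 1 - γ τ‖ ≤ M * ‖z - γ τ‖ := by
  have hτ' : τ ∈ Icc (0:ℝ) 1 := ⟨hτ.1.le, hτ.2.le⟩
  have h0 : (0:ℝ) ∈ Icc (0:ℝ) 1 := ⟨le_rfl, zero_le_one⟩
  have h1 : (1:ℝ) ∈ Icc (0:ℝ) 1 := ⟨zero_le_one, le_rfl⟩
  have htail := h.mul_norm_sub_le_wLengthOn hw_cont hτ' h1 hτ.2.le hm hwm
  have hsplit := h.wLengthOn_add hw_cont h0 hτ' h1
  have hconc := h.wDist_le_wLengthOn_add hw_cont hw_nonneg ⟨hτ.1, hτ.2.le⟩ hΩ hM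
  linarith

theorem div_mul_norm_le_infDist (h : IsWPath Ω x₀ (γ 1) γ) (hw_cont : Continuous w)
    (hw_nonneg : ∀ x, 0 ≤ w x) (hgeo : wDist Ω w x₀ (γ 1) = wLengthOn w γ 0 1)
    {ρ : ℝ} (hball : ∀ p ∈ ball (γ 1) ρ, p ∈ Ω ∧ m ≤ w p ∧ w p ≤ M) (hm : 0 ≤ m) (hmM : m ≤ M)
    (hM : 0 < M) (hτ : τ ∈ Ioo (0:ℝ) 1) (hclose : ∀ s ∈ Icc τ 1, dist (γ s) (γ 1) < ρ / 2) :
    m / M * ‖γ τ - γ 1‖ ≤ infDist (γ τ) {x ∈ Ω | wDist Ω w x₀ x = wDist Ω w x₀ (γ 1)} := by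
  have hγτ := hclose τ ⟨le_rfl, hτ.2.le⟩
  have hρ : 0 < ρ := by linarith [dist_nonneg (x := γ τ) (y := γ 1)]
  have hratio : m / M ≤ 1 := div_le_one_of_le₀ hmM hM.le
  have hS : {x ∈ Ω | wDist Ω w x₀ x = wDist Ω w x₀ (γ 1)}.Nonempty :=
    ⟨γ 1, (hball _ (mem_ball_self hρ)).1, rfl⟩
  refine (le_infDist hS).2 fun z ⟨_, hz⟩ => ?_
  rcases le_or_gt (ρ / 2) (dist (γ τ) z) with hfar | hnear
  · rw [← dist_eq_norm]
    nlinarith [dist_nonneg (x := γ τ) (y := γ 1)]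
  have hseg : segment ℝ (γ τ) z ⊆ ball (γ 1) ρ := (convex_ball _ _).segment_subset
    (mem_ball.2 (by linarith))
    (mem_ball.2 (by linarith [dist_triangle z (γ τ) (γ 1), dist_comm z (γ τ)]))
  have key := h.mul_norm_sub_le_of_wDist_eq hw_cont hw_nonneg hgeo hτ hm
    (fun s hs => (hball _ (mem_ball.2 (by linarith [hclose s hs]))).2.1)
    (fun p hp => (hball p (hseg hp)).1) (fun p hp => (hball p (hseg hp)).2.2) hz
  rw [div_mul_eq_mul_div, div_le_iff₀ hM, dist_eq_norm, norm_sub_rev, norm_sub_rev (γ τ)]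
  linarith

theorem eventually_lt_infDist_div (h : IsWPath Ω x₀ (γ 1) γ) (hΩo : IsOpen Ω)
    (hw_cont : Continuous w) (hw_pos : ∀ x, 0 < w x)
    (hgeo : wDist Ω w x₀ (γ 1) = wLengthOn w γ 0 1) (hne : ∀ t ∈ Ioo (0:ℝ) 1, γ t ≠ γ 1)
    {a : ℝ} (ha : a < 1) :
    ∀ᶠ τ in nhdsWithin 1 (Iio 1),
      a < infDist (γ τ) {x ∈ Ω | wDist Ω w x₀ x = wDist Ω w x₀ (γ 1)} / ‖γ τ - γ 1‖ := by
  obtain ⟨m, M, hm, hmc, hcM, ham⟩ := exists_lt_lt_div_gt ha (hw_pos (γ 1))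
  obtain ⟨ρ, hρ, hball⟩ := Metric.eventually_nhds_iff_ball.1
    ((hΩo.eventually_mem (h.2.2.2.2.2 1 ⟨zero_le_one, le_rfl⟩)).and
      (hw_cont.continuousAt.eventually (Icc_mem_nhds hmc hcM)))
  obtain ⟨K, hK⟩ := h.1
  have hcont : ContinuousWithinAt γ (Iic 1) 1 :=
    (hK.continuousOn 1 ⟨zero_le_one, le_rfl⟩).mono_of_mem_nhdsWithin (Icc_mem_nhdsLE one_pos)
  filter_upwards [hcont.eventually_forall_Icc_dist_lt (half_pos hρ),
    Ioo_mem_nhdsLT one_pos] with τ hclose hτ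
  have hpos : 0 < ‖γ τ - γ 1‖ := norm_pos_iff.2 (sub_ne_zero.2 (hne τ hτ))
  rw [lt_div_iff₀ hpos]
  calc a * ‖γ τ - γ 1‖ < m / M * ‖γ τ - γ 1‖ := by gcongr
    _ ≤ _ := h.div_mul_norm_le_infDist hw_cont (fun x => (hw_pos x).le) hgeo hball hm.le
      (hmc.trans hcM).le (hm.trans (hmc.trans hcM)) hτ hclose

end IsWPath

theorem stmt_13_general (Ω : Set X) (hΩo : IsOpen Ω)
    (w : X → ℝ) (hw_cont : Continuous w) (hw_pos : ∀ x, 0 < w x)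
    (x₀ : X) (γ : ℝ → X)
    (hpath : IsWPath Ω x₀ (γ 1) γ)
    -- `γ` is a geodesic: it realises the inner distance on every initial segment
    (hgeo : ∀ t ∈ Icc (0:ℝ) 1, wDist Ω w x₀ (γ t) = wLengthOn w γ 0 t)
    (hne : ∀ t ∈ Ico (0:ℝ) 1, γ t ≠ γ 1)
    (r : ℝ) (hr : r = wDist Ω w x₀ (γ 1)) :
    Tendsto
      (fun t => infDist (γ t) {x ∈ Ω | wDist Ω w x₀ x = r} / ‖γ t - γ 1‖)
      (nhdsWithin 1 (Iio 1)) (nhds 1) := by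
  subst hr
  have := hpath.completeSpace (hpath.2.2.2.1 ▸ hne 0 ⟨le_rfl, zero_lt_one⟩)
  refine tendsto_order.2 ⟨fun a ha => hpath.eventually_lt_infDist_div hΩo hw_cont hw_pos
    (hgeo 1 ⟨zero_le_one, le_rfl⟩) (fun t ht => hne t (Ioo_subset_Ico_self ht)) ha,
    fun a ha => ?_⟩
  have hγ1 : γ 1 ∈ {x ∈ Ω | wDist Ω w x₀ x = wDist Ω w x₀ (γ 1)} :=
    ⟨hpath.2.2.2.2.2 1 ⟨zero_le_one, le_rfl⟩, rfl⟩
  refine Eventually.of_forall fun τ => (div_le_one_of_le₀ ?_ (norm_nonneg _)).trans_lt ha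
  simpa only [dist_eq_norm] using infDist_le_dist_of_mem hγ1

/-- a `w`-geodesic meets the `w`-sphere it terminates on
"orthogonally": the distance from `γ(t)` to the sphere is asymptotically
`‖γ(t) - γ(1)‖` as `t → 1⁻`. -/
theorem stmt_13 (Ω : Set X) (hΩo : IsOpen Ω)
    (w : X → ℝ) (hw_cont : Continuous w) (hw_pos : ∀ x, 0 < w x)
    (x₀ : X) (hx₀ : x₀ ∈ Ω) (γ : ℝ → X)
    (hpath : IsWPath Ω x₀ (γ 1) γ)
    -- `γ` is a geodesic: it realises the inner distance on every initial segment
    (hgeo : ∀ t ∈ Icc (0:ℝ) 1, wDist Ω w x₀ (γ t) = wLengthOn w γ 0 t)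
    (hne : ∀ t ∈ Ico (0:ℝ) 1, γ t ≠ γ 1)
    (r : ℝ) (hr : r = wDist Ω w x₀ (γ 1)) :
    Tendsto
      (fun t => infDist (γ t) {x ∈ Ω | wDist Ω w x₀ x = r} / ‖γ t - γ 1‖)
      (nhdsWithin 1 (Iio 1)) (nhds 1) :=
  stmt_13_general Ω hΩo w hw_cont hw_pos x₀ γ hpath hgeo hne r hr
end
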